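/- arXiv:2505.21073 — 2 statements merged into one kernel-verified Lean document; each statement's English description precedes it below -/
import Mathlib

section
/- Let (X, d_X) be a finite metric space on n points with hyperbolicity δ_X, and suppose (X*, d_{X*}) minimizes the objective L(d') = μ·‖d_X − d'‖_∞ + δ_{d'} over metrics d' on X with d' ≤ d_X pointwise. If a tree embedding Φ of (X*, d_{X*}) into a tree metric (T*, d_{T*}) satisfies d_{X*}(x,y) − 2δ_{X*}·log₂(n−2) ≤ d_{T*}(Φ(x),Φ(y)) ≤ d_{X*}(x,y) for all x,y, then for all x,y: d_X(x,y) − C ≤ d_{T*}(Φ(x),Φ(y)) ≤ d_X(x,y), where C = 2δ_X·log₂(n−2) + (1 − 2μ·log₂(n−2))·‖d_X − d_{X*}‖_∞. -/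
/-- A (pseudo)metric given as a function on a finite set. -/
def IsMetricFun {X : Type*} (d : X → X → ℝ) : Prop :=
  (∀ x, d x x = 0) ∧ (∀ x y, d x y = d y x) ∧ (∀ x y, 0 ≤ d x y) ∧
    (∀ x y z, d x z ≤ d x y + d y z)

/-- Gromov hyperbolicity of a distance function on a finite nonempty set. -/
noncomputable def gromovHypFun {X : Type*} [Fintype X] [Nonempty X] (d : X → X → ℝ) : ℝ :=
  Finset.univ.sup' Finset.univ_nonempty (fun q : X × X × X × X =>
    min ((d q.1 q.2.2.2 + d q.2.1 q.2.2.2 - d q.1 q.2.1) / 2)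
        ((d q.2.1 q.2.2.2 + d q.2.2.1 q.2.2.2 - d q.2.1 q.2.2.1) / 2) -
      (d q.1 q.2.2.2 + d q.2.2.1 q.2.2.2 - d q.1 q.2.2.1) / 2)

/-- Sup-distance between two distance functions on a finite nonempty set. -/
noncomputable def supDistFun {X : Type*} [Fintype X] [Nonempty X] (d d' : X → X → ℝ) : ℝ :=
  Finset.univ.sup' Finset.univ_nonempty (fun p : X × X => |d p.1 p.2 - d' p.1 p.2|)

theorem deltazero_better_distortion {X : Type*} [Fintype X] [Nonempty X]
    {T : Type*} [MetricSpace T] (n : ℕ) (hn : n = Fintype.card X)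
    (dX dS : X → X → ℝ) (hdX : IsMetricFun dX) (hdS : IsMetricFun dS)
    (hle : ∀ x y, dS x y ≤ dX x y) (μ : ℝ) (hμ : 0 < μ)
    (hmin : ∀ d' : X → X → ℝ, IsMetricFun d' → (∀ x y, d' x y ≤ dX x y) →
      μ * supDistFun dX dS + gromovHypFun dS ≤ μ * supDistFun dX d' + gromovHypFun d')
    (Φ : X → T)
    (hemb : ∀ x y,
      dS x y - 2 * gromovHypFun dS * Real.logb 2 ((n : ℝ) - 2) ≤ dist (Φ x) (Φ y) ∧
        dist (Φ x) (Φ y) ≤ dS x y) :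
    ∀ x y,
      dX x y - (2 * gromovHypFun dX * Real.logb 2 ((n : ℝ) - 2) +
          (1 - 2 * Real.logb 2 ((n : ℝ) - 2) * μ) * supDistFun dX dS) ≤ dist (Φ x) (Φ y) ∧
        dist (Φ x) (Φ y) ≤ dX x y := by
  intro x y
  set L : ℝ := Real.logb 2 ((n : ℝ) - 2) with hLdef
  set E : ℝ := supDistFun dX dS with hEdef
  -- L is nonneg (it is 0 when n ≤ 3 since log of -1, 0, 1 is 0)
  have hcard : 1 ≤ n := by rw [hn]; exact Fintype.card_pos
  have hL : 0 ≤ L := by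
    rcases le_or_gt n 2 with h | h
    · have : n = 1 ∨ n = 2 := by omega
      rcases this with rfl | rfl
      · simp [hLdef, Real.logb]
        rw [show ((1:ℝ) - 2) = -1 by norm_num, Real.log_neg_eq_log, Real.log_one]
        simp
      · simp [hLdef]
    · have h3 : (1:ℝ) ≤ (n : ℝ) - 2 := by
        have : (3:ℝ) ≤ (n:ℝ) := by exact_mod_cast h
        linarith
      exact Real.logb_nonneg (by norm_num) h3
  -- supDistFun dX dX = 0
  have hself : supDistFun dX dX = 0 := by
    apply le_antisymm
    · apply Finset.sup'_le
      intro p _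
      simp
    · exact Finset.le_sup'_of_le _ (Finset.mem_univ (x, x)) (by simp)
  -- minimality applied to dX itself
  have hmin' := hmin dX hdX (fun a b => le_refl _)
  rw [hself, mul_zero, zero_add] at hmin'
  have hkey : gromovHypFun dS ≤ gromovHypFun dX - μ * E := by linarith
  -- pointwise bound
  have hpt : dX x y - dS x y ≤ E := by
    have h1 : |dX x y - dS x y| ≤ E :=
      Finset.le_sup' (fun p : X × X => |dX p.1 p.2 - dS p.1 p.2|) (Finset.mem_univ (x, y))
    exact le_trans (le_abs_self _) h1
  obtain ⟨h1, h2⟩ := hemb x y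
  refine ⟨?_, le_trans h2 (hle x y)⟩
  have hmul : 2 * gromovHypFun dS * L ≤ 2 * (gromovHypFun dX - μ * E) * L := by
    apply mul_le_mul_of_nonneg_right _ hL
    linarith
  nlinarith [hmul, h1, hpt]
end

section
/- Given a finite metric space (X, d) and a basepoint w, set m = max_{x∈X} d(x,w) and define d_G(x,y) = m − (x|y)_w for x ≠ y and d_G(x,x) = 0, where (x|y)_w is the Gromov product. Then d_G is a metric on X. -/
theorem gromov_base_metric {X : Type*} [MetricSpace X] [Fintype X] [Nonempty X] [DecidableEq X] (w : X) :
    let m : ℝ := Finset.univ.sup' Finset.univ_nonempty (fun x => dist x w)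
    let dG : X → X → ℝ := fun x y =>
      if x = y then 0 else m - (dist x w + dist y w - dist x y) / 2
    (∀ x y, 0 ≤ dG x y) ∧ (∀ x y, dG x y = dG y x) ∧ (∀ x, dG x x = 0) ∧
      (∀ x y, x ≠ y → 0 < dG x y) ∧ (∀ x y z, dG x z ≤ dG x y + dG y z) := by
  intro m dG
  have hm : ∀ x : X, dist x w ≤ m := by
    intro x
    exact Finset.le_sup' (fun y => dist y w) (Finset.mem_univ x)
  have hpos : ∀ x y : X, x ≠ y → 0 < dG x y := by
    intro x y hxy
    simp only [dG, if_neg hxy]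
    have h1 := hm x
    have h2 := hm y
    have h3 : 0 < dist x y := dist_pos.mpr hxy
    linarith
  have hnonneg : ∀ x y : X, 0 ≤ dG x y := by
    intro x y
    by_cases h : x = y
    · simp [dG, h]
    · exact (hpos x y h).le
  refine ⟨hnonneg, ?_, ?_, hpos, ?_⟩
  · intro x y
    by_cases h : x = y
    · simp [dG, h]
    · simp only [dG, if_neg h, if_neg (Ne.symm h), dist_comm x y]
      ring
  · intro x; simp [dG]
  · intro x y z
    by_cases hxz : x = z
    · subst hxz
      simp only [dG, if_pos rfl]
      exact add_nonneg (hnonneg x y) (hnonneg y x)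
    by_cases hxy : x = y
    · subst hxy
      simp only [dG, if_pos rfl]
      linarith [hnonneg x z]
    by_cases hyz : y = z
    · subst hyz
      simp only [dG, if_pos rfl]
      linarith [hnonneg x y]
    · simp only [dG, if_neg hxz, if_neg hxy, if_neg hyz]
      have ht := dist_triangle x y z
      have h2 := hm y
      linarith
end
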